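/- Let C_n be the cycle graph on n ≥ 3 vertices and let f be a divisor on C_n with deg(f) ≥ 1. Then f is L-effective. -/

import Mathlib

/-- A finite loopless multigraph on vertex set `V`, given by its symmetric
edge-multiplicity function `e`. -/
structure Multigraph (V : Type*) [Fintype V] [DecidableEq V] where
  e : V → V → ℕ
  symm : ∀ u v, e u v = e v u
  loopless : ∀ v, e v v = 0

namespace Multigraph

variable {V : Type*} [Fintype V] [DecidableEq V]

/-- The degree of a vertex of a multigraph. -/
def vdeg (G : Multigraph V) (v : V) : ℕ := ∑ u, G.e v u

/-- The number of edges of a multigraph. -/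
def edgeCount (G : Multigraph V) : ℕ := (∑ u, ∑ v, G.e u v) / 2

/-- The underlying simple graph (adjacency) of a multigraph. -/
def toSimple (G : Multigraph V) : SimpleGraph V where
  Adj u v := G.e u v ≠ 0
  symm := by constructor; intro u v h; rwa [G.symm]
  loopless := by constructor; intro v h; exact h (G.loopless v)

/-- A multigraph is connected if its underlying simple graph is. -/
def Connected (G : Multigraph V) : Prop := G.toSimple.Connected

/-- The degree of a divisor `f : V → ℤ`. -/
def degree (f : V → ℤ) : ℤ := ∑ v, f v

/-- A divisor is effective if all its values are nonnegative. -/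
def Effective (f : V → ℤ) : Prop := ∀ v, 0 ≤ f v

/-- The divisor `x · Δ_G`, where `Δ_G` is the Laplacian matrix of `G`. -/
def lapApply (G : Multigraph V) (x : V → ℤ) : V → ℤ :=
  fun v => x v * (G.vdeg v : ℤ) - ∑ u, x u * (G.e u v : ℤ)

/-- Linear equivalence of divisors: `g = f + x Δ_G` for some `x : V → ℤ`. -/
def LinEquiv (G : Multigraph V) (f g : V → ℤ) : Prop :=
  ∃ x : V → ℤ, g = f + G.lapApply x

/-- A divisor is L-effective if it is linearly equivalent to an effective divisor. -/
def LEffective (G : Multigraph V) (f : V → ℤ) : Prop :=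
  ∃ g : V → ℤ, G.LinEquiv f g ∧ Effective g

/-- The Baker–Norine rank of a divisor: `-1` if `f` is not L-effective, and
otherwise the largest `r ≥ 0` such that `f - λ` is L-effective for every
effective divisor `λ` of degree `r`. -/
noncomputable def rank (G : Multigraph V) (f : V → ℤ) : ℤ :=
  sSup ({-1} ∪ {r : ℤ | 0 ≤ r ∧
    ∀ l : V → ℤ, Effective l → degree l = r → G.LEffective (f - l)})

/-- The divisor `ε_v`. -/
def epsDiv (v : V) : V → ℤ := fun u => if u = v then 1 else 0

/-- A tree: a connected acyclic (multi)graph. -/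
def IsTree (G : Multigraph V) : Prop :=
  G.toSimple.IsTree ∧ ∀ u v, G.e u v ≤ 1

/-- A cycle graph: connected, and every vertex has degree 2. -/
def IsCycleGraph (G : Multigraph V) : Prop :=
  G.Connected ∧ ∀ v, G.vdeg v = 2

/-- An edge: two vertices joined by a single edge. -/
def IsEdgeGraph (G : Multigraph V) : Prop :=
  Fintype.card V = 2 ∧ G.Connected ∧ ∀ u v, G.e u v ≤ 1

/-- A good divisor (on a cycle): degree `0` and linearly equivalent to `0`. -/
def Good (G : Multigraph V) (f : V → ℤ) : Prop :=
  degree f = 0 ∧ G.LinEquiv f 0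

/-- A bad divisor (on a cycle): degree `0` and not linearly equivalent to `0`. -/
def Bad (G : Multigraph V) (f : V → ℤ) : Prop :=
  degree f = 0 ∧ ¬ G.LinEquiv f 0

/-- The induced sub-multigraph on a finite set `S` of vertices. -/
def induce (G : Multigraph V) (S : Finset V) : Multigraph {x // x ∈ S} where
  e a b := G.e a.1 b.1
  symm := fun a b => G.symm a.1 b.1
  loopless := fun a => G.loopless a.1

/-- `v` decomposes the induced subgraph of `G` on `S` into the induced
subgraphs on `V1` and `U`: they cover `S`, meet exactly in `v`, are both
connected, and there is no edge between `V1 \ {v}` and `U \ {v}`. -/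
def DecompOn (G : Multigraph V) (S : Finset V) (v : V) (V1 U : Finset V) : Prop :=
  V1 ∪ U = S ∧ V1 ∩ U = {v} ∧
  (G.induce V1).Connected ∧ (G.induce U).Connected ∧
  ∀ a ∈ V1, ∀ b ∈ U, a ≠ v → b ≠ v → G.e a b = 0

/-- `v` decomposes `G` into the induced subgraphs on `V1` and `U`. -/
def Decomp (G : Multigraph V) (v : V) (V1 U : Finset V) : Prop :=
  G.DecompOn Finset.univ v V1 U

/-- The contraction `f_{G/H}` of a divisor `f`, where `H = G(U)` and
`G/H = G(V1)`, the cut vertex being `v`. -/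
def contractDiv (f : V → ℤ) (v : V) (V1 U : Finset V) : {x // x ∈ V1} → ℤ :=
  fun u => if u.1 = v then ∑ w ∈ U, f w else f u.1

/-- The zero `f_{N(H)}` of a divisor `f`, where `H = G(U)`, the cut vertex
being `v`. -/
def zeroDiv (f : V → ℤ) (v : V) (U : Finset V) : {x // x ∈ U} → ℤ :=
  fun u => if u.1 = v then - ∑ w ∈ U.erase v, f w else f u.1

/-- `ε_v` as a divisor on an induced subgraph. -/
def epsDivOn (S : Finset V) (v : V) : {x // x ∈ S} → ℤ :=
  fun u => if u.1 = v then 1 else 0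

/-- A simple cycle of `G`, given as a sub-multigraph (an edge-multiplicity
function bounded by that of `G`) which is connected on its support and in
which every vertex of its (nonempty) support has degree 2. -/
def IsCycleSubgraph (G : Multigraph V) (h : V → V → ℕ) : Prop :=
  (∀ u v, h u v ≤ G.e u v) ∧ (∀ u v, h u v = h v u) ∧
  (∀ v, (∑ u, h v u = 0) ∨ (∑ u, h v u = 2)) ∧
  (∃ v, ∑ u, h v u ≠ 0) ∧
  (∀ v w, (∑ u, h v u ≠ 0) → (∑ u, h w u ≠ 0) →
    Relation.ReflTransGen (fun a b => h a b ≠ 0) v w)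

/-- The vertex support of a sub-multigraph. -/
def cycleSupport (h : V → V → ℕ) : Finset V :=
  Finset.univ.filter (fun v => ∑ u, h v u ≠ 0)

/-- A cactus: a connected multigraph in which any two distinct simple cycles
have at most one vertex in common (in particular every edge has multiplicity
at most 2, since parallel edges form 2-cycles). -/
def IsCactus (G : Multigraph V) : Prop :=
  G.Connected ∧ (∀ u v, G.e u v ≤ 2) ∧
  ∀ h₁ h₂ : V → V → ℕ, G.IsCycleSubgraph h₁ → G.IsCycleSubgraph h₂ → h₁ ≠ h₂ →
    (cycleSupport h₁ ∩ cycleSupport h₂).card ≤ 1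

/-- One step of a block elimination scheme: `G(S')` is obtained from `G(S)`
by contracting a free block (an edge or a cycle) `G(U)` at the vertex `v`. -/
def BlockStep (G : Multigraph V) (S S' : Finset V) : Prop :=
  ∃ (v : V) (U : Finset V), G.DecompOn S v S' U ∧
    ((G.induce U).IsEdgeGraph ∨ (G.induce U).IsCycleGraph)

/-- A block elimination scheme: a sequence of contractions of free blocks,
starting from `G` and ending at a single vertex. -/
def HasBlockEliminationScheme (G : Multigraph V) : Prop :=
  ∃ (k : ℕ) (S : ℕ → Finset V), S 0 = Finset.univ ∧ (S k).card = 1 ∧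
    ∀ i < k, G.BlockStep (S i) (S (i + 1))

end Multigraph

/-!
Work in the group `Pic G` of divisors modulo principal divisors. Going around the cycle by a
two-way infinite walk `w`, firing the vertex `w (k + 1)` shows that `[ε (w (k + 1))] - [ε (w k)]`
is a constant class `D`, so `[ε (w k)] = [ε (w 0)] + k • D` for every `k : ℤ`. Since every vertex
is some `w k_v`, a divisor `f` of degree `d` has class `d • [ε (w 0)] + m • D` with
`m = ∑ f v * k_v`, which is also the class of `(d - 1) • ε (w 0) + ε (w m)`: an effective divisor
as soon as `d ≥ 1`. The walk comes from iterating, in both directions, the permutation of darts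
that continues a dart `a → b` to the other neighbour of `b`.
-/

theorem SimpleGraph.Reachable.mem_of_adj_closed {V : Type*} {G : SimpleGraph V} {s : Set V}
    (hs : ∀ x ∈ s, ∀ y, G.Adj x y → y ∈ s) {u v : V} (huv : G.Reachable u v) (hu : u ∈ s) :
    v ∈ s := by
  obtain ⟨p⟩ := huv
  induction p with
  | nil => exact hu
  | cons hadj _ ih => exact ih (hs _ hu _ hadj)

theorem eq_add_zsmul_of_sub_eq_sub {A : Type*} [AddCommGroup A] {a : ℤ → A}
    (h : ∀ k, a (k + 2) - a (k + 1) = a (k + 1) - a k) (k : ℤ) :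
    a k = a 0 + k • (a 1 - a 0) := by
  have hdiff : ∀ k, a (k + 1) - a k = a 1 - a 0 := by
    intro k
    induction k with
    | zero => simp
    | succ i ih => rw [show (i : ℤ) + 1 + 1 = i + 2 by ring, h, ih]
    | pred i ih =>
      have := h (-i - 1)
      rw [show -(i : ℤ) - 1 + 2 = -i + 1 by ring, show -(i : ℤ) - 1 + 1 = -i by ring] at this
      rw [show -(i : ℤ) - 1 + 1 = -i by ring, ← this, ih]
  induction k with
  | zero => simp
  | succ i ih => rw [← sub_add_cancel (a (i + 1)) (a i), hdiff, ih, add_smul, one_smul]; abel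
  | pred i ih =>
    have := hdiff (-i - 1)
    rw [sub_add_cancel] at this
    rw [show a (-i - 1) = a (-i) - (a 1 - a 0) by rw [← this]; abel, ih, sub_smul, one_smul]
    abel

namespace Multigraph

section Divisors

variable {V : Type*}

theorem degree_add [Fintype V] (f g : V → ℤ) : degree (f + g) = degree f + degree g :=
  Finset.sum_add_distrib

theorem degree_sub [Fintype V] (f g : V → ℤ) : degree (f - g) = degree f - degree g :=
  Finset.sum_sub_distrib f g

variable [DecidableEq V]

theorem effective_epsDiv (v : V) : Effective (epsDiv v) := by
  intro u
  unfold epsDiv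
  split_ifs <;> norm_num

theorem epsDiv_injective : Function.Injective (epsDiv : V → V → ℤ) := by
  intro a b h
  simpa [epsDiv] using congrFun h a

variable [Fintype V]

theorem sum_smul_epsDiv (f : V → ℤ) : ∑ v, f v • epsDiv v = f := by
  funext u
  simp [Finset.sum_apply, epsDiv]

theorem degree_epsDiv (v : V) : degree (epsDiv v) = 1 := by
  simp [degree, epsDiv]

theorem exists_eq_epsDiv {φ : V → ℤ} (hφ : Effective φ) (h1 : degree φ = 1) :
    ∃ c, φ = epsDiv c := by
  obtain ⟨c, -, hc⟩ : ∃ c ∈ Finset.univ, φ c ≠ 0 :=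
    Finset.exists_ne_zero_of_sum_ne_zero (by rw [← degree, h1]; norm_num)
  have hrest : ∑ u ∈ Finset.univ.erase c, φ u = 1 - φ c := by
    rw [← h1, degree, ← Finset.add_sum_erase _ _ (Finset.mem_univ c)]; ring
  have hrest_nonneg := Finset.sum_nonneg fun u (_ : u ∈ Finset.univ.erase c) => hφ u
  have hc1 : φ c = 1 := by have := hφ c; omega
  have hrest0 : ∀ u ∈ Finset.univ.erase c, φ u = 0 :=
    (Finset.sum_eq_zero_iff_of_nonneg fun u _ => hφ u).1 (by omega)
  refine ⟨c, funext fun u => ?_⟩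
  by_cases huc : u = c
  · simp [epsDiv, huc, hc1]
  · simp [epsDiv, huc, hrest0 u (Finset.mem_erase.2 ⟨huc, Finset.mem_univ u⟩)]

end Divisors

variable {V : Type*} [Fintype V] [DecidableEq V] (G : Multigraph V)

def nbrDiv (b : V) : V → ℤ := fun u => G.e b u

theorem degree_nbrDiv (b : V) : degree (G.nbrDiv b) = G.vdeg b := by
  simp [degree, nbrDiv, vdeg]

theorem exists_nbrDiv_eq_epsDiv_add {a b : V} (hb : G.vdeg b = 2) (ha : G.e b a ≠ 0) :
    ∃ c, G.nbrDiv b = epsDiv a + epsDiv c := by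
  obtain ⟨c, hc⟩ := exists_eq_epsDiv (φ := G.nbrDiv b - epsDiv a)
    (fun u => by
      by_cases hu : u = a
      · subst hu
        simp only [Pi.sub_apply, nbrDiv, epsDiv, ↓reduceIte, Int.sub_nonneg, Nat.one_le_cast]
        omega
      · simp [nbrDiv, epsDiv, hu])
    (by rw [degree_sub, degree_nbrDiv, degree_epsDiv, hb]; norm_num)
  exact ⟨c, by rw [← hc]; abel⟩

def lapHom : (V → ℤ) →+ (V → ℤ) :=
  AddMonoidHom.mk' G.lapApply fun x y => by
    funext v
    simp only [lapApply, Pi.add_apply, add_mul, Finset.sum_add_distrib]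
    ring

theorem lapApply_epsDiv (b : V) :
    G.lapApply (epsDiv b) = (G.vdeg b : ℤ) • epsDiv b - G.nbrDiv b := by
  funext v
  by_cases hv : v = b
  · subst hv; simp [lapApply, epsDiv, nbrDiv, G.loopless]
  · simp [lapApply, epsDiv, nbrDiv, hv, G.symm b v]

abbrev Pic := (V → ℤ) ⧸ G.lapHom.range

theorem mk_lapApply (x : V → ℤ) : (G.lapApply x : G.Pic) = 0 :=
  (QuotientAddGroup.eq_zero_iff _).2 ⟨x, rfl⟩

theorem linEquiv_of_mk_eq {f g : V → ℤ} (h : (f : G.Pic) = g) : G.LinEquiv f g := by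
  obtain ⟨x, hx⟩ := QuotientAddGroup.eq.1 h
  exact ⟨x, by rw [show G.lapApply x = -f + g from hx]; abel⟩

/-- A two-way infinite walk `w` in which the neighbours of every vertex `w (k + 1)`, counted
with multiplicity, are exactly `w k` and `w (k + 2)`. -/
def IsWinding (w : ℤ → V) : Prop :=
  ∀ k, G.nbrDiv (w (k + 1)) = epsDiv (w k) + epsDiv (w (k + 2))

namespace IsWinding

variable {G} {w : ℤ → V}

theorem mk_epsDiv (hw : G.IsWinding w) (k : ℤ) :
    (epsDiv (w k) : G.Pic) = epsDiv (w 0) + k • ((epsDiv (w 1) : G.Pic) - epsDiv (w 0)) := by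
  refine eq_add_zsmul_of_sub_eq_sub (a := fun k => (epsDiv (w k) : G.Pic)) (fun k => ?_) k
  have hdeg : (G.vdeg (w (k + 1)) : ℤ) = 2 := by
    rw [← degree_nbrDiv, hw k, degree_add, degree_epsDiv, degree_epsDiv]
    norm_num
  have h := G.mk_lapApply (epsDiv (w (k + 1)))
  simp only [lapApply_epsDiv, hw k, hdeg, QuotientAddGroup.mk_sub, QuotientAddGroup.mk_add,
    two_zsmul] at h
  rw [← sub_eq_zero, ← neg_eq_zero, ← h]
  abel

theorem surjective (hw : G.IsWinding w) (hconn : G.Connected) : Function.Surjective w := by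
  have hclosed : ∀ x ∈ Set.range w, ∀ y, G.toSimple.Adj x y → y ∈ Set.range w := by
    rintro _ ⟨k, rfl⟩ y hy
    have hy' := congrFun (hw (k - 1)) y
    rw [sub_add_cancel] at hy'
    by_cases h1 : y = w (k - 1)
    · exact ⟨k - 1, h1.symm⟩
    by_cases h2 : y = w (k - 1 + 2)
    · exact ⟨k - 1 + 2, h2.symm⟩
    simp only [nbrDiv, Pi.add_apply, epsDiv, h1, h2, ↓reduceIte, add_zero,
      Int.natCast_eq_zero] at hy'
    exact absurd hy' hy
  exact fun v => (hconn.preconnected (w 0) v).mem_of_adj_closed hclosed ⟨0, rfl⟩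

theorem lEffective (hw : G.IsWinding w) (hsurj : Function.Surjective w) (f : V → ℤ) (hf : 1 ≤ degree f) :
    G.LEffective f := by
  choose idx hidx using hsurj
  set D : G.Pic := (epsDiv (w 1) : G.Pic) - epsDiv (w 0)
  set m : ℤ := ∑ v, f v * idx v
  have hf_class : (f : G.Pic) = degree f • (epsDiv (w 0) : G.Pic) + m • D := by
    conv_lhs => rw [← sum_smul_epsDiv f]
    simp only [QuotientAddGroup.mk_sum, QuotientAddGroup.mk_zsmul]
    conv_lhs => enter [2, v]; rw [← hidx v, hw.mk_epsDiv, hidx v]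
    simp only [degree, m, D, zsmul_add, Finset.sum_add_distrib, smul_smul, ← Finset.sum_smul]
  refine ⟨(degree f - 1) • epsDiv (w 0) + epsDiv (w m), G.linEquiv_of_mk_eq ?_, fun u => ?_⟩
  · rw [hf_class, QuotientAddGroup.mk_add, QuotientAddGroup.mk_zsmul, hw.mk_epsDiv m, sub_smul,
      one_smul]
    abel
  · simp only [Pi.add_apply, Pi.smul_apply, smul_eq_mul]
    exact add_nonneg (mul_nonneg (by omega) (effective_epsDiv _ u)) (effective_epsDiv _ u)

end IsWinding

section NextDart

variable {G} (hG : ∀ v, G.vdeg v = 2)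

noncomputable def otherNbr (d : G.toSimple.Dart) : V :=
  (G.exists_nbrDiv_eq_epsDiv_add (hG d.snd) d.adj.symm).choose

theorem nbrDiv_snd_eq (d : G.toSimple.Dart) :
    G.nbrDiv d.snd = epsDiv d.fst + epsDiv (otherNbr hG d) :=
  (G.exists_nbrDiv_eq_epsDiv_add (hG d.snd) d.adj.symm).choose_spec

theorem adj_otherNbr (d : G.toSimple.Dart) : G.toSimple.Adj d.snd (otherNbr hG d) := by
  have h := congrFun (nbrDiv_snd_eq hG d) (otherNbr hG d)
  have := effective_epsDiv d.fst (otherNbr hG d)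
  intro h0
  simp only [nbrDiv, h0, Pi.add_apply, epsDiv, if_true] at h
  omega

noncomputable def nextDart (d : G.toSimple.Dart) : G.toSimple.Dart :=
  ⟨(d.snd, otherNbr hG d), adj_otherNbr hG d⟩

theorem nextDart_injective : Function.Injective (nextDart hG) := by
  intro d d' h
  have hsnd : d.snd = d'.snd := congrArg (·.fst) h
  have hother : otherNbr hG d = otherNbr hG d' := congrArg (·.snd) h
  have hfst : d.fst = d'.fst := by
    have hnbr := nbrDiv_snd_eq hG d
    rw [hsnd, nbrDiv_snd_eq hG d', hother] at hnbr
    exact epsDiv_injective (add_right_cancel hnbr).symm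
  exact (SimpleGraph.Dart.ext_iff _ _).2 (Prod.ext hfst hsnd)

noncomputable def nextDartEquiv : Equiv.Perm G.toSimple.Dart :=
  Equiv.ofBijective (nextDart hG) <| by
    classical exact Finite.injective_iff_bijective.1 (nextDart_injective hG)

theorem isWinding_nextDartEquiv_zpow (d : G.toSimple.Dart) :
    G.IsWinding fun k => ((nextDartEquiv hG ^ k) d).fst := by
  have hsucc : ∀ j : ℤ,
      (nextDartEquiv hG ^ (j + 1)) d = nextDart hG ((nextDartEquiv hG ^ j) d) := by
    intro j
    rw [add_comm, zpow_one_add, Equiv.Perm.mul_apply]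
    rfl
  intro k
  simp only [show k + 2 = k + 1 + 1 by ring, hsucc]
  exact nbrDiv_snd_eq hG _

end NextDart

end Multigraph

open Multigraph

variable {V : Type*} [Fintype V] [DecidableEq V]

theorem cycle_LEffective_of_pos_degree_general (G : Multigraph V)
    (hC : G.IsCycleGraph)
    (f : V → ℤ) (hdeg : 1 ≤ degree f) :
    G.LEffective f := by
  obtain ⟨v⟩ : Nonempty V := by
    by_contra hV
    rw [not_nonempty_iff] at hV
    simp [degree] at hdeg
  obtain ⟨u, hu⟩ : ∃ u, G.e v u ≠ 0 := by
    by_contra! h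
    simpa [vdeg, h] using hC.2 v
  have hw := isWinding_nextDartEquiv_zpow hC.2 (⟨(v, u), hu⟩ : G.toSimple.Dart)
  exact hw.lEffective (hw.surjective hC.1) f hdeg

/-- on a cycle with `n ≥ 3` vertices, every divisor of degree
at least `1` is L-effective. -/
theorem cycle_LEffective_of_pos_degree (G : Multigraph V)
    (hC : G.IsCycleGraph) (hcard : 3 ≤ Fintype.card V)
    (f : V → ℤ) (hdeg : 1 ≤ degree f) :
    G.LEffective f :=
  cycle_LEffective_of_pos_degree_general G hC f hdeg
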